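/- Let μ be a finite nonnegative Borel measure on ℝ with limsup_{|ξ|→∞}|μ̂(ξ)| < μ(ℝ), and let u ∈ L²(ℝ, μ, ℂ) with |u| = 1 μ-a.e. Then the trajectory Γ_u = {Φ_t u : t ∈ ℝ} is not dense in the torus 𝕋_u = {v ∈ L²(ℝ, μ, ℂ) : |v(x)| = 1 μ-a.e.} (assuming 𝕋_u is not compact, i.e., the torus is infinite-dimensional). -/

import Mathlib

open MeasureTheory Filter

open scoped InnerProductSpace

section Aux

variable {μ : Measure ℝ} [IsFiniteMeasure μ]

private lemma aux_cont (ξ : ℝ) :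
    Continuous fun x : ℝ => Complex.exp (-(↑ξ * ↑x) * Complex.I) :=
  Complex.continuous_exp.comp
    (((continuous_const.mul Complex.continuous_ofReal).neg).mul continuous_const)

private lemma aux_cont' (x : ℝ) :
    Continuous fun ξ : ℝ => Complex.exp (-(↑ξ * ↑x) * Complex.I) :=
  Complex.continuous_exp.comp
    (((Complex.continuous_ofReal.mul continuous_const).neg).mul continuous_const)

private lemma aux_norm_exp (ξ x : ℝ) :
    ‖Complex.exp (-(↑ξ * ↑x) * Complex.I)‖ = 1 := by
  have h : -(↑ξ * ↑x) * Complex.I = (↑(-(ξ * x)) : ℂ) * Complex.I := by push_cast; ring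
  rw [h, Complex.norm_exp_ofReal_mul_I]

private lemma aux_integrable (μ : Measure ℝ) [IsFiniteMeasure μ] (ξ : ℝ) :
    Integrable (fun x : ℝ => Complex.exp (-(↑ξ * ↑x) * Complex.I)) μ := by
  refine (integrable_const (1 : ℝ)).mono' (aux_cont ξ).aestronglyMeasurable ?_
  exact Eventually.of_forall fun x => le_of_eq (aux_norm_exp ξ x)

end Aux

/-- If `limsup_{|ξ|→∞}|μ̂(ξ)| < μ(ℝ)` and `|u| = 1` μ-a.e., then the trajectory
`Γ_u = {Φ_t u : t ∈ ℝ}` is not dense in the torus `𝕋_u = {v ∈ L² : |v| = 1 a.e.}`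
(assuming the torus is not compact). -/
theorem stmt_3 (μ : Measure ℝ) [IsFiniteMeasure μ]
    (hlim : Filter.limsup
        (fun ξ : ℝ => ‖∫ x, Complex.exp (-(ξ * x) * Complex.I) ∂μ‖)
        (Filter.cocompact ℝ) < (μ Set.univ).toReal)
    (u : Lp ℂ 2 μ) (hu1 : ∀ᵐ x ∂μ, ‖u x‖ = 1)
    (hnc : ¬ IsCompact {v : Lp ℂ 2 μ | ∀ᵐ x ∂μ, ‖v x‖ = 1}) :
    ¬ ({v : Lp ℂ 2 μ | ∀ᵐ x ∂μ, ‖v x‖ = 1} ⊆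
        closure {w : Lp ℂ 2 μ |
          ∃ t : ℝ, ⇑w =ᵐ[μ] fun x : ℝ => Complex.exp ((↑(t * x)) * Complex.I) * u x}) := by
  intro hdense
  set M : ℝ := (μ Set.univ).toReal with hM
  set G : ℝ → ℂ := fun ξ => ∫ x, Complex.exp (-(↑ξ * ↑x) * Complex.I) ∂μ with hG
  have hGnorm : ∀ ξ, ‖G ξ‖ ≤ M := by
    intro ξ
    calc ‖G ξ‖ ≤ ∫ x, ‖Complex.exp (-(↑ξ * ↑x) * Complex.I)‖ ∂μ :=
          norm_integral_le_integral_norm _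
      _ = ∫ _x, (1 : ℝ) ∂μ := by
          refine integral_congr_ae (Eventually.of_forall fun x => ?_)
          exact aux_norm_exp ξ x
      _ = M := by simp [hM, Measure.real]
  have hbdd : IsBoundedUnder (· ≤ ·) (Filter.cocompact ℝ) (fun ξ => ‖G ξ‖) :=
    isBoundedUnder_of ⟨M, hGnorm⟩
  have hlim' : Filter.limsup (fun ξ => ‖G ξ‖) (Filter.cocompact ℝ) < M := hlim
  -- M > 0 and μ ≠ 0
  have hMpos : 0 < M :=
    lt_of_le_of_lt
      (le_limsup_of_frequently_le (Frequently.of_forall fun ξ => norm_nonneg _) hbdd) hlim'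
  have hμ0 : μ ≠ 0 := by
    intro h
    rw [hM, h] at hMpos
    simp at hMpos
  have : (ae μ).NeBot := ae_neBot.2 hμ0
  -- -u belongs to the torus
  have hvmem : (-u) ∈ {v : Lp ℂ 2 μ | ∀ᵐ x ∂μ, ‖v x‖ = 1} := by
    filter_upwards [hu1, Lp.coeFn_neg u] with x h1 h2
    rw [h2]
    simpa using h1
  have hcl := hdense hvmem
  obtain ⟨w, hw, hwt⟩ := mem_closure_iff_seq_limit.1 hcl
  choose t ht using hw
  -- inner products give the Fourier transform
  have hinner : ∀ n, ⟪w n, u⟫_ℂ = G (t n) := by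
    intro n
    rw [MeasureTheory.L2.inner_def]
    refine integral_congr_ae ?_
    filter_upwards [ht n, hu1] with x h1 h2
    rw [RCLike.inner_apply, h1]
    have hux : (starRingEnd ℂ) (u x) * u x = 1 := by
      have := Complex.mul_conj (u x)
      rw [mul_comm] at this
      rw [this, Complex.normSq_eq_norm_sq]
      rw [h2]
      norm_num
    have hconj : (starRingEnd ℂ) (Complex.exp ((↑(t n * x)) * Complex.I))
        = Complex.exp (-(↑(t n) * ↑x) * Complex.I) := by
      rw [← Complex.exp_conj, map_mul, Complex.conj_I, Complex.conj_ofReal]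
      push_cast
      ring_nf
    rw [map_mul, mul_comm, mul_assoc, hux, mul_one, hconj]
  have huu : ⟪u, u⟫_ℂ = (M : ℂ) := by
    rw [MeasureTheory.L2.inner_def]
    have : ∀ᵐ x ∂μ, (⟪u x, u x⟫_ℂ) = (1 : ℂ) := by
      filter_upwards [hu1] with x h2
      rw [RCLike.inner_apply]
      have := Complex.mul_conj (u x)
      rw [mul_comm] at this
      rw [mul_comm, this, Complex.normSq_eq_norm_sq, h2]
      norm_num
    rw [integral_congr_ae this]
    simp [hM, Measure.real]
  -- the Fourier transform along the times tends to -M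
  have htend : Tendsto (fun n => G (t n)) atTop (nhds (-(M : ℂ))) := by
    have h1 : Tendsto (fun n => ⟪w n, u⟫_ℂ) atTop (nhds ⟪-u, u⟫_ℂ) :=
      hwt.inner tendsto_const_nhds
    rw [inner_neg_left, huu] at h1
    exact h1.congr fun n => hinner n
  have hnormtend : Tendsto (fun n => ‖G (t n)‖) atTop (nhds M) := by
    have := htend.norm
    simpa [abs_of_pos hMpos] using this
  -- eventually the times lie in a compact set
  set b : ℝ := (Filter.limsup (fun ξ => ‖G ξ‖) (Filter.cocompact ℝ) + M) / 2 with hb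
  have hb1 : Filter.limsup (fun ξ => ‖G ξ‖) (Filter.cocompact ℝ) < b := by
    rw [hb]; linarith
  have hb2 : b < M := by rw [hb]; linarith
  have hev : ∀ᶠ ξ in Filter.cocompact ℝ, ‖G ξ‖ < b :=
    eventually_lt_of_limsup_lt hb1 hbdd
  obtain ⟨K, hK, hKs⟩ := mem_cocompact.1 hev
  have hevt : ∀ᶠ n in atTop, t n ∈ K := by
    filter_upwards [hnormtend.eventually (eventually_gt_nhds hb2)] with n hn
    by_contra hc
    exact absurd (hKs hc) (by simpa using hn.le)
  obtain ⟨N, hN⟩ := eventually_atTop.1 hevt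
  -- extract a convergent subsequence of times
  obtain ⟨t₀, _ht₀K, φ, hφ, hφt⟩ :=
    hK.tendsto_subseq (x := fun k => t (k + N)) (fun k => hN _ (Nat.le_add_left N k))
  -- the Fourier transform is sequentially continuous
  have hGcont : Tendsto (fun k => G (t (φ k + N))) atTop (nhds (G t₀)) := by
    refine tendsto_integral_of_dominated_convergence (fun _ => (1 : ℝ)) ?_ (integrable_const 1) ?_ ?_
    · intro k
      exact (aux_cont _).aestronglyMeasurable
    · intro k
      exact Eventually.of_forall fun x => le_of_eq (aux_norm_exp _ x)
    · refine Eventually.of_forall fun x => ?_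
      exact ((aux_cont' x).tendsto t₀).comp hφt
  have hGsub : Tendsto (fun k => G (t (φ k + N))) atTop (nhds (-(M : ℂ))) := by
    have h1 : Tendsto (fun k => φ k + N) atTop atTop :=
      (tendsto_add_atTop_nat N).comp hφ.tendsto_atTop
    exact htend.comp h1
  have hGt₀ : G t₀ = -(M : ℂ) := tendsto_nhds_unique hGcont hGsub
  -- equality case: exp(-(t₀ x) I) = -1 a.e.
  have hint : Integrable (fun x : ℝ => Complex.exp (-(↑t₀ * ↑x) * Complex.I)) μ :=
    aux_integrable μ t₀
  have hre' : ∫ x, ((1 : ℝ) + RCLike.re (Complex.exp (-(↑t₀ * ↑x) * Complex.I))) ∂μ = 0 := by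
    rw [integral_add (integrable_const 1) hint.re, integral_re hint]
    have hGre : RCLike.re (∫ x, Complex.exp (-(↑t₀ * ↑x) * Complex.I) ∂μ)
        = RCLike.re (G t₀) := rfl
    rw [hGre, hGt₀]
    simp [hM, Measure.real]
  have hre : ∫ x, ((1 : ℝ) + (Complex.exp (-(↑t₀ * ↑x) * Complex.I)).re) ∂μ = 0 := by
    simp only [RCLike.re_to_complex] at hre'
    exact hre' 
  have hnonneg : ∀ x : ℝ, (0 : ℝ) ≤ 1 + (Complex.exp (-(↑t₀ * ↑x) * Complex.I)).re := by
    intro x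
    have h1 : |(Complex.exp (-(↑t₀ * ↑x) * Complex.I)).re| ≤ 1 := by
      have := Complex.abs_re_le_norm (Complex.exp (-(↑t₀ * ↑x) * Complex.I))
      rw [aux_norm_exp t₀ x] at this
      exact this
    linarith [abs_le.1 h1 |>.1]
  have hae0 := (integral_eq_zero_iff_of_nonneg hnonneg
    ((integrable_const (1 : ℝ)).add hint.re)).1 hre
  have hae : ∀ᵐ (x : ℝ) ∂μ, Complex.exp (-(↑t₀ * ↑x) * Complex.I) = -1 := by
    filter_upwards [hae0] with x hx
    have hre1 : (Complex.exp (-(↑t₀ * ↑x) * Complex.I)).re = -1 := by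
      have : (1 : ℝ) + (Complex.exp (-(↑t₀ * ↑x) * Complex.I)).re = 0 := hx
      linarith
    have habs : ‖Complex.exp (-(↑t₀ * ↑x) * Complex.I)‖ = 1 := by
      exact aux_norm_exp t₀ x
    have hns : Complex.normSq (Complex.exp (-(↑t₀ * ↑x) * Complex.I)) = 1 := by
      rw [Complex.normSq_eq_norm_sq, habs]; norm_num
    rw [Complex.normSq_apply, hre1] at hns
    have him : (Complex.exp (-(↑t₀ * ↑x) * Complex.I)).im = 0 := by
      nlinarith [sq_nonneg ((Complex.exp (-(↑t₀ * ↑x) * Complex.I)).im)]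
    apply Complex.ext
    · simpa using hre1
    · simpa using him
  -- t₀ ≠ 0
  have ht₀ne : t₀ ≠ 0 := by
    intro h
    rw [h] at hae
    have : ∀ᵐ _x ∂μ, False := by
      filter_upwards [hae] with x hx
      simp at hx
      exact absurd hx (by norm_num)
    obtain ⟨x, hx⟩ := this.exists
    exact hx
  -- reduce to positive time s = |t₀|
  have hkey : ∀ᵐ (x : ℝ) ∂μ, Complex.exp (-(↑|t₀| * ↑x) * Complex.I) = -1 := by
    rcases le_or_gt 0 t₀ with h | h
    · rwa [abs_of_nonneg h]
    · rw [abs_of_neg h]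
      filter_upwards [hae] with x hx
      have heq : -(↑(-t₀) * ↑x) * Complex.I
          = (starRingEnd ℂ) (-(↑t₀ * ↑x) * Complex.I) := by
        rw [map_mul, map_neg, map_mul, Complex.conj_I, Complex.conj_ofReal, Complex.conj_ofReal]
        push_cast
        ring
      rw [heq, Complex.exp_conj, hx]
      simp
  have hspos : 0 < |t₀| := abs_pos.2 ht₀ne
  -- at frequencies 2(m+1)|t₀| the Fourier transform equals M
  have hfreqval : ∀ m : ℕ, ‖G ((2 * (m : ℝ) + 2) * |t₀|)‖ = M := by
    intro m
    have hone : ∀ᵐ (x : ℝ) ∂μ,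
        Complex.exp (-(↑((2 * (m : ℝ) + 2) * |t₀|) * ↑x) * Complex.I) = 1 := by
      filter_upwards [hkey] with x hx
      have harg : -(↑((2 * (m : ℝ) + 2) * |t₀|) * ↑x) * Complex.I
          = ((2 * m + 2 : ℕ) : ℂ) * (-(↑|t₀| * ↑x) * Complex.I) := by
        push_cast
        ring
      rw [harg, Complex.exp_nat_mul, hx]
      rw [show (2 * m + 2) = 2 * (m + 1) by ring, pow_mul]
      norm_num
    have : G ((2 * (m : ℝ) + 2) * |t₀|) = ∫ _x, (1 : ℂ) ∂μ := integral_congr_ae hone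
    rw [hG] at this ⊢
    rw [this]
    simp [hM, abs_of_pos hMpos, Measure.real]
  have hξtend : Tendsto (fun m : ℕ => (2 * (m : ℝ) + 2) * |t₀|) atTop atTop := by
    refine Tendsto.atTop_mul_const hspos ?_
    exact tendsto_atTop_add_const_right _ 2
      (Tendsto.const_mul_atTop two_pos tendsto_natCast_atTop_atTop)
  have hfr : ∃ᶠ ξ in Filter.cocompact ℝ, M ≤ ‖G ξ‖ := by
    refine Frequently.filter_mono (hξtend.frequently ?_) ?_
    · exact Frequently.of_forall fun m => (hfreqval m).ge
    · rw [cocompact_eq_atBot_atTop]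
      exact le_sup_right
  have : M ≤ Filter.limsup (fun ξ => ‖G ξ‖) (Filter.cocompact ℝ) :=
    le_limsup_of_frequently_le hfr hbdd
  linarith
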